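/- For every row-stochastic q^z (m×K), every row-stochastic q^w (n×L), and every μ ∈ (0,∞)^{K×L}, J̄(1^{z*}, 1^{w*}, μ*) − J̄(q^z, q^w, μ) = Σ_{i=1}^m Σ_{j=1}^n θ*_i λ*_j Σ_{k=1}^K Σ_{l=1}^L q^z_{ik} q^w_{jl} · KL(μ*_{z*_i, w*_j}, μ_{kl}) ≥ 0; in particular, J̄ attains its maximum over all such triples at (1^{z*}, 1^{w*}, μ*). -/

import Mathlib

/-!
Expanding `KL(a, b) = a log a - a - a log b + b`, the `(i, j)` term of `J̄(1^{z*}, 1^{w*}, μ*) - J̄(q^z, q^w, μ)`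
is `θ*_i λ*_j` times the `q^z_{i·} ⊗ q^w_{j·}`-average of `KL(μ*_{z*_i w*_j}, μ_{kl})`, because the weights
`q^z_{ik} q^w_{jl}` sum to one and `M_{ij} = θ*_i λ*_j μ*_{z*_i w*_j}`. Each KL term is nonnegative by
`log x ≤ x - 1`, which gives the inequality and the maximality of the true triple.
-/

open scoped BigOperators

namespace DCLBM

/-- The indicator (hard-assignment) matrix `1^{z}` of a label vector `z`. -/
noncomputable def indic {m K : ℕ} (z : Fin m → Fin K) : Fin m → Fin K → ℝ :=
  fun i k => if z i = k then 1 else 0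

/-- The soft confusion matrix `R_{kk'}(q, q̃) = (1/m) Σ_i q_{ik} q̃_{ik'}`. -/
noncomputable def Rmat {m K : ℕ} (q qt : Fin m → Fin K → ℝ) (k k' : Fin K) : ℝ :=
  (1 / (m : ℝ)) * ∑ i, q i k * qt i k'

/-- The Poisson Kullback–Leibler divergence `KL(a, b) = a log(a/b) - (a - b)`. -/
noncomputable def KLdiv (a b : ℝ) : ℝ := a * Real.log (a / b) - (a - b)

/-- The population separation functional
`G(q^z, q^w, μ) = Σ_{k,l,k',l'} R_{kk'}(1^{z*}, q^z) R_{ll'}(1^{w*}, q^w) KL(μ*_{kl}, μ_{k'l'})`. -/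
noncomputable def Gfun {m n K L : ℕ} (zs : Fin m → Fin K) (ws : Fin n → Fin L)
    (μs : Fin K → Fin L → ℝ)
    (qz : Fin m → Fin K → ℝ) (qw : Fin n → Fin L → ℝ) (μm : Fin K → Fin L → ℝ) : ℝ :=
  ∑ k, ∑ l, ∑ k', ∑ l',
    Rmat (indic zs) qz k k' * Rmat (indic ws) qw l l' * KLdiv (μs k l) (μm k' l')

/-- The distance between two triples `(q^z, q^w, μ)` and `(q̃^z, q̃^w, μ̃)`. -/
noncomputable def distTriple {m n K L : ℕ}
    (qz : Fin m → Fin K → ℝ) (qw : Fin n → Fin L → ℝ) (μm : Fin K → Fin L → ℝ)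
    (qz' : Fin m → Fin K → ℝ) (qw' : Fin n → Fin L → ℝ) (μm' : Fin K → Fin L → ℝ) : ℝ :=
  (1 - ∑ k, Rmat qz qz' k k) + (1 - ∑ l, Rmat qw qw' l l) +
    ∑ k, ∑ l, |μm k l - μm' k l|

/-- A matrix is row-stochastic if its entries lie in `[0,1]` and each row sums to `1`. -/
def RowStoch {m K : ℕ} (q : Fin m → Fin K → ℝ) : Prop :=
  (∀ i k, 0 ≤ q i k ∧ q i k ≤ 1) ∧ (∀ i, ∑ k, q i k = 1)

lemma KLdiv_nonneg {a b : ℝ} (ha : 0 < a) (hb : 0 < b) : 0 ≤ KLdiv a b := by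
  have hlog : Real.log (b / a) ≤ b / a - 1 := Real.log_le_sub_one_of_pos (div_pos hb ha)
  have hswap : Real.log (b / a) = -Real.log (a / b) := by rw [← Real.log_inv, inv_div]
  have hscaled := mul_le_mul_of_nonneg_left hlog ha.le
  rw [hswap, mul_sub, mul_div_cancel₀ b ha.ne', mul_one] at hscaled
  unfold KLdiv
  linarith

lemma KLdiv_eq {a b : ℝ} (ha : 0 < a) (hb : 0 < b) :
    KLdiv a b = a * Real.log a - a - a * Real.log b + b := by
  rw [KLdiv, Real.log_div ha.ne' hb.ne']
  ring

lemma sum_sum_mul_KLdiv {κ ι : Type*} [Fintype κ] [Fintype ι] (p : κ → ι → ℝ)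
    (hp : ∑ k, ∑ l, p k l = 1) {a : ℝ} (ha : 0 < a) {b : κ → ι → ℝ} (hb : ∀ k l, 0 < b k l) :
    ∑ k, ∑ l, p k l * KLdiv a (b k l) =
      a * Real.log a - a - a * (∑ k, ∑ l, p k l * Real.log (b k l)) + ∑ k, ∑ l, p k l * b k l := by
  simp only [KLdiv_eq ha (hb _ _), mul_add, mul_sub, Finset.sum_add_distrib,
    Finset.sum_sub_distrib, Finset.mul_sum]
  simp only [← Finset.sum_mul, hp, one_mul, mul_left_comm a]

lemma sum_sum_indic_mul_indic_mul {m n K L : ℕ} (z : Fin m → Fin K) (w : Fin n → Fin L)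
    (f : Fin K → Fin L → ℝ) (i : Fin m) (j : Fin n) :
    ∑ k, ∑ l, indic z i k * indic w j l * f k l = f (z i) (w j) := by
  simp [indic, ite_mul]

lemma RowStoch.sum_sum_mul {m n K L : ℕ} {qz : Fin m → Fin K → ℝ} {qw : Fin n → Fin L → ℝ}
    (hqz : RowStoch qz) (hqw : RowStoch qw) (i : Fin m) (j : Fin n) :
    ∑ k, ∑ l, qz i k * qw j l = 1 := by
  simp only [← Finset.mul_sum, ← Finset.sum_mul, hqz.2 i, hqw.2 j, one_mul]

lemma RowStoch.mul_nonneg {m n K L : ℕ} {qz : Fin m → Fin K → ℝ} {qw : Fin n → Fin L → ℝ}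
    (hqz : RowStoch qz) (hqw : RowStoch qw) (i : Fin m) (j : Fin n) (k : Fin K) (l : Fin L) :
    0 ≤ qz i k * qw j l :=
  _root_.mul_nonneg (hqz.1 i k).1 (hqw.1 j l).1

end DCLBM

open DCLBM

theorem statement17_general (m n K L : ℕ)
    (zs : Fin m → Fin K) (ws : Fin n → Fin L)
    (θs : Fin m → ℝ) (lams : Fin n → ℝ) (μs : Fin K → Fin L → ℝ)
    (hθs : ∀ i, 0 < θs i) (hlams : ∀ j, 0 < lams j) (hμs : ∀ k l, 0 < μs k l)
    (M : Fin m → Fin n → ℝ) (hM : ∀ i j, M i j = θs i * lams j * μs (zs i) (ws j))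
    (Jbar : (Fin m → Fin K → ℝ) → (Fin n → Fin L → ℝ) → (Fin K → Fin L → ℝ) → ℝ)
    (hJbar : ∀ qz qw μm, Jbar qz qw μm =
      -(∑ i, ∑ j, θs i * lams j * (∑ k, ∑ l, qz i k * qw j l * μm k l))
      + ∑ i, ∑ j, M i j * (∑ k, ∑ l, qz i k * qw j l * Real.log (μm k l))) :
    ∀ (qz : Fin m → Fin K → ℝ) (qw : Fin n → Fin L → ℝ) (μm : Fin K → Fin L → ℝ),
      DCLBM.RowStoch qz → DCLBM.RowStoch qw → (∀ k l, 0 < μm k l) →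
      Jbar (DCLBM.indic zs) (DCLBM.indic ws) μs - Jbar qz qw μm =
        (∑ i, ∑ j, θs i * lams j *
          (∑ k, ∑ l, qz i k * qw j l * DCLBM.KLdiv (μs (zs i) (ws j)) (μm k l))) ∧
      0 ≤ (∑ i, ∑ j, θs i * lams j *
          (∑ k, ∑ l, qz i k * qw j l * DCLBM.KLdiv (μs (zs i) (ws j)) (μm k l))) ∧
      Jbar qz qw μm ≤ Jbar (DCLBM.indic zs) (DCLBM.indic ws) μs := by
  intro qz qw μm hqz hqw hμm
  have hterm : ∀ i j, θs i * lams j *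
      (∑ k, ∑ l, qz i k * qw j l * KLdiv (μs (zs i) (ws j)) (μm k l)) =
      (-(θs i * lams j * μs (zs i) (ws j)) + M i j * Real.log (μs (zs i) (ws j))) -
      (-(θs i * lams j * ∑ k, ∑ l, qz i k * qw j l * μm k l) +
        M i j * ∑ k, ∑ l, qz i k * qw j l * Real.log (μm k l)) := by
    intro i j
    rw [sum_sum_mul_KLdiv _ (hqz.sum_sum_mul hqw i j) (hμs _ _) hμm, hM]
    ring
  have hEq : Jbar (indic zs) (indic ws) μs - Jbar qz qw μm =
      ∑ i, ∑ j, θs i * lams j *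
        (∑ k, ∑ l, qz i k * qw j l * KLdiv (μs (zs i) (ws j)) (μm k l)) := by
    simp only [hJbar, sum_sum_indic_mul_indic_mul, hterm, Finset.sum_add_distrib,
      Finset.sum_sub_distrib, Finset.sum_neg_distrib]
  have hNonneg : 0 ≤ ∑ i, ∑ j, θs i * lams j *
      (∑ k, ∑ l, qz i k * qw j l * KLdiv (μs (zs i) (ws j)) (μm k l)) :=
    Finset.sum_nonneg fun i _ => Finset.sum_nonneg fun j _ =>
      mul_nonneg (mul_nonneg (hθs i).le (hlams j).le) <|
        Finset.sum_nonneg fun k _ => Finset.sum_nonneg fun l _ =>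
          mul_nonneg (hqz.mul_nonneg hqw i j k l) (KLdiv_nonneg (hμs _ _) (hμm k l))
  exact ⟨hEq, hNonneg, by linarith⟩

/-- with `M_{ij} = θ*_i λ*_j μ*_{z*_i w*_j}` and
`J̄(q^z, q^w, μ) = -Σ_{ij} θ*_i λ*_j Σ_{kl} q^z_{ik} q^w_{jl} μ_{kl}
 + Σ_{ij} M_{ij} Σ_{kl} q^z_{ik} q^w_{jl} log μ_{kl}`, one has
`J̄(1^{z*}, 1^{w*}, μ*) - J̄(q^z, q^w, μ)
 = Σ_{ij} θ*_i λ*_j Σ_{kl} q^z_{ik} q^w_{jl} KL(μ*_{z*_i w*_j}, μ_{kl}) ≥ 0`,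
so `J̄` is maximized at `(1^{z*}, 1^{w*}, μ*)`. -/
theorem statement17 (m n K L : ℕ) (hm : 0 < m) (hn : 0 < n) (hK : 0 < K) (hL : 0 < L)
    (zs : Fin m → Fin K) (ws : Fin n → Fin L)
    (θs : Fin m → ℝ) (lams : Fin n → ℝ) (μs : Fin K → Fin L → ℝ)
    (hθs : ∀ i, 0 < θs i) (hlams : ∀ j, 0 < lams j) (hμs : ∀ k l, 0 < μs k l)
    (M : Fin m → Fin n → ℝ) (hM : ∀ i j, M i j = θs i * lams j * μs (zs i) (ws j))
    (Jbar : (Fin m → Fin K → ℝ) → (Fin n → Fin L → ℝ) → (Fin K → Fin L → ℝ) → ℝ)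
    (hJbar : ∀ qz qw μm, Jbar qz qw μm =
      -(∑ i, ∑ j, θs i * lams j * (∑ k, ∑ l, qz i k * qw j l * μm k l))
      + ∑ i, ∑ j, M i j * (∑ k, ∑ l, qz i k * qw j l * Real.log (μm k l))) :
    ∀ (qz : Fin m → Fin K → ℝ) (qw : Fin n → Fin L → ℝ) (μm : Fin K → Fin L → ℝ),
      DCLBM.RowStoch qz → DCLBM.RowStoch qw → (∀ k l, 0 < μm k l) →
      Jbar (DCLBM.indic zs) (DCLBM.indic ws) μs - Jbar qz qw μm =
        (∑ i, ∑ j, θs i * lams j *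
          (∑ k, ∑ l, qz i k * qw j l * DCLBM.KLdiv (μs (zs i) (ws j)) (μm k l))) ∧
      0 ≤ (∑ i, ∑ j, θs i * lams j *
          (∑ k, ∑ l, qz i k * qw j l * DCLBM.KLdiv (μs (zs i) (ws j)) (μm k l))) ∧
      Jbar qz qw μm ≤ Jbar (DCLBM.indic zs) (DCLBM.indic ws) μs :=
  statement17_general m n K L zs ws θs lams μs hθs hlams hμs M hM Jbar hJbar
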